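/- arXiv:2411.13887 — 3 statements merged into one kernel-verified Lean document; each statement's English description precedes it below -/
import Mathlib

section
/- The canonical isomorphism between harmonic space and cohomology: the composition of the inclusion ker(Δ_p) ↪ ker(δ_p) with the quotient projection ker(δ_p) → ker(δ_p)/im(δ_{p-1}) is a linear isomorphism from ker(Δ_p) onto the p-th cohomology H^p = ker(δ_p)/im(δ_{p-1}). -/
/-!
Since `⟪Δ x, x⟫ = ‖δ_p x‖² + ‖δ_{p-1}* x‖²` and `ker δ_{p-1}* = (im δ_{p-1})ᗮ`, the harmonic
space is `ker δ_p ⊓ (im δ_{p-1})ᗮ`. As `im δ_{p-1} ≤ ker δ_p`, the orthogonal decomposition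
`ker δ_p = im δ_{p-1} ⊕ (ker δ_p ⊓ (im δ_{p-1})ᗮ)` makes this complement map isomorphically onto
the quotient `ker δ_p ⧸ im δ_{p-1}`.
-/

open scoped InnerProductSpace
open LinearMap Submodule

section

variable {𝕜 U V W : Type*} [RCLike 𝕜]
  [NormedAddCommGroup U] [InnerProductSpace 𝕜 U] [FiniteDimensional 𝕜 U]
  [NormedAddCommGroup V] [InnerProductSpace 𝕜 V] [FiniteDimensional 𝕜 V]
  [NormedAddCommGroup W] [InnerProductSpace 𝕜 W] [FiniteDimensional 𝕜 W]

lemma LinearMap.re_inner_adjoint_comp_add_comp_adjoint_self (A : V →ₗ[𝕜] W) (B : U →ₗ[𝕜] V)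
    (x : V) :
    RCLike.re ⟪(A.adjoint ∘ₗ A + B ∘ₗ B.adjoint) x, x⟫_𝕜 = ‖A x‖ ^ 2 + ‖B.adjoint x‖ ^ 2 := by
  rw [add_apply, comp_apply, comp_apply, inner_add_left, map_add, adjoint_inner_left A x,
    ← adjoint_inner_right B, inner_self_eq_norm_sq, inner_self_eq_norm_sq]

lemma LinearMap.ker_adjoint_comp_add_comp_adjoint (A : V →ₗ[𝕜] W) (B : U →ₗ[𝕜] V) :
    ker (A.adjoint ∘ₗ A + B ∘ₗ B.adjoint) = ker A ⊓ (range B)ᗮ := by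
  rw [orthogonal_range]
  ext x
  simp only [mem_inf, mem_ker]
  constructor
  · intro hx
    have hsum := re_inner_adjoint_comp_add_comp_adjoint_self A B x
    rw [hx, inner_zero_left, map_zero] at hsum
    obtain ⟨hA, hB⟩ := (add_eq_zero_iff_of_nonneg (by positivity) (by positivity)).mp hsum.symm
    exact ⟨norm_eq_zero.mp (pow_eq_zero_iff two_ne_zero |>.mp hA),
      norm_eq_zero.mp (pow_eq_zero_iff two_ne_zero |>.mp hB)⟩
  · rintro ⟨hA, hB⟩
    simp [hA, hB]

end

section

variable {𝕜 E : Type*} [RCLike 𝕜] [NormedAddCommGroup E] [InnerProductSpace 𝕜 E]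

lemma Submodule.bijective_mkQ_comp_inclusion_of_eq_inf_orthogonal {K Z H : Submodule 𝕜 E}
    [K.HasOrthogonalProjection] (hKZ : K ≤ Z) (hH : H = Z ⊓ Kᗮ) (hHZ : H ≤ Z) :
    Function.Bijective ((K.comap Z.subtype).mkQ ∘ₗ inclusion hHZ) := by
  subst hH
  constructor
  · rw [← ker_eq_bot, ker_eq_bot']
    intro h hh
    have hK : (h : E) ∈ K := by simpa using (Quotient.mk_eq_zero _).mp hh
    exact Subtype.ext ((Submodule.eq_bot_iff _).mp K.inf_orthogonal_eq_bot _ ⟨hK, h.2.2⟩)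
  · intro q
    obtain ⟨z, rfl⟩ := Quotient.mk_surjective _ q
    have hz : (z : E) ∈ K ⊔ Kᗮ ⊓ Z := by
      rw [sup_orthogonal_inf_of_hasOrthogonalProjection hKZ]
      exact z.2
    obtain ⟨k, hk, h, hh, hkh⟩ := mem_sup.mp hz
    refine ⟨⟨h, hh.2, hh.1⟩, (Quotient.eq _).mpr ?_⟩
    have : h - (z : E) = -k := by rw [← hkh]; abel
    simpa [this] using neg_mem hk

end

/-- The canonical isomorphism between harmonic space and
cohomology: the composition of the inclusion `ker(Δ_p) ↪ ker(δ_p)` with the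
quotient projection `ker(δ_p) → ker(δ_p)/im(δ_{p-1})` is a linear isomorphism
from `ker(Δ_p)` onto `H^p = ker(δ_p)/im(δ_{p-1})`. -/
theorem harmonic_iso_cohomology
    {Vpm1 Vp Vpp1 : Type*}
    [NormedAddCommGroup Vpm1] [InnerProductSpace ℝ Vpm1] [FiniteDimensional ℝ Vpm1]
    [NormedAddCommGroup Vp] [InnerProductSpace ℝ Vp] [FiniteDimensional ℝ Vp]
    [NormedAddCommGroup Vpp1] [InnerProductSpace ℝ Vpp1] [FiniteDimensional ℝ Vpp1]
    (δpm1 : Vpm1 →ₗ[ℝ] Vp) (δp : Vp →ₗ[ℝ] Vpp1)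
    (hcomplex : δp ∘ₗ δpm1 = 0)
    (Δp : Vp →ₗ[ℝ] Vp)
    (hΔ : Δp = LinearMap.adjoint δp ∘ₗ δp + δpm1 ∘ₗ LinearMap.adjoint δpm1) :
    ∃ hle : LinearMap.ker Δp ≤ LinearMap.ker δp,
      Function.Bijective
        ((Submodule.mkQ
            ((LinearMap.range δpm1).comap (LinearMap.ker δp).subtype)) ∘ₗ
          Submodule.inclusion hle) := by
  have hker : ker Δp = ker δp ⊓ (range δpm1)ᗮ :=
    hΔ ▸ ker_adjoint_comp_add_comp_adjoint δp δpm1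
  have hle : ker Δp ≤ ker δp := hker.le.trans inf_le_left
  exact ⟨hle, bijective_mkQ_comp_inclusion_of_eq_inf_orthogonal
    (range_le_ker_iff.mpr hcomplex) hker hle⟩
end

section
/- Existence of the maximal subdominant ultrametric: let X be a finite nonempty set and let d : X × X → ℝ be a metric on X (nonnegative, vanishing exactly on the diagonal, symmetric, satisfying the triangle inequality). Then there exists an ultrametric u : X × X → ℝ on X such that u(x,y) ≤ d(x,y) for all x, y ∈ X, and such that for every ultrametric u' on X with u'(x,y) ≤ d(x,y) for all x, y, one has u'(x,y) ≤ u(x,y) for all x, y ∈ X. -/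
/-! The pointwise supremum of any bounded nonempty family of ultrametrics is again an ultrametric,
so the supremum of all ultrametrics below `d` is the greatest one. The family is nonempty because,
`X` being finite, `d` is bounded below off the diagonal by some `ε > 0`, and the discrete
ultrametric at level `ε` lies below `d`. -/

open Set

section

variable {X : Type*}

structure IsUltrametric (u : X → X → ℝ) : Prop where
  nonneg : ∀ x y, 0 ≤ u x y
  eq_zero_iff : ∀ x y, u x y = 0 ↔ x = y
  symm : ∀ x y, u x y = u y x
  le_max : ∀ x y z, u x y ≤ max (u x z) (u z y)

namespace IsUltrametric

theorem pos {u : X → X → ℝ} (hu : IsUltrametric u) {x y : X} (hxy : x ≠ y) : 0 < u x y :=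
  (hu.nonneg x y).lt_of_ne' (mt (hu.eq_zero_iff x y).1 hxy)

theorem discrete [DecidableEq X] {ε : ℝ} (hε : 0 < ε) :
    IsUltrametric fun x y : X => if x = y then 0 else ε where
  nonneg x y := by split_ifs <;> positivity
  eq_zero_iff x y := by split_ifs with h <;> simp [h, hε.ne']
  symm x y := by simp only [eq_comm]
  le_max x y z := by split_ifs <;> simp_all [hε.le]

theorem ciSup {ι : Sort*} [Nonempty ι] {v : ι → X → X → ℝ} (hv : ∀ i, IsUltrametric (v i))
    (hbdd : ∀ x y, BddAbove (range fun i => v i x y)) :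
    IsUltrametric fun x y => ⨆ i, v i x y where
  nonneg x y := (hv (Classical.arbitrary ι)).nonneg x y |>.trans (le_ciSup (hbdd x y) _)
  eq_zero_iff x y := by
    constructor
    · intro h
      by_contra hxy
      exact (((hv (Classical.arbitrary ι)).pos hxy).trans_le (le_ciSup (hbdd x y) _)).ne' h
    · rintro rfl
      simp only [((hv _).eq_zero_iff x x).2 rfl, ciSup_const]
  symm x y := by simp only [(hv _).symm x y]
  le_max x y z := ciSup_le fun i => ((hv i).le_max x y z).trans <|
    max_le_max (le_ciSup (hbdd x z) i) (le_ciSup (hbdd z y) i)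

end IsUltrametric

theorem exists_pos_le_of_finite {ι : Type*} [Finite ι] (f : ι → ℝ) (hf : ∀ i, 0 < f i) :
    ∃ ε > 0, ∀ i, ε ≤ f i := by
  cases isEmpty_or_nonempty ι
  · exact ⟨1, one_pos, isEmptyElim⟩
  · obtain ⟨i, hi⟩ := Finite.exists_min f
    exact ⟨f i, hf i, hi⟩

theorem exists_isUltrametric_le [Finite X] {d : X → X → ℝ} (hd_nonneg : ∀ x y, 0 ≤ d x y)
    (hd_pos : ∀ x y, x ≠ y → 0 < d x y) : ∃ v, IsUltrametric v ∧ v ≤ d := by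
  classical
  obtain ⟨ε, hε, hεd⟩ := exists_pos_le_of_finite
    (fun p : {p : X × X // p.1 ≠ p.2} => d p.1.1 p.1.2) fun p => hd_pos _ _ p.2
  refine ⟨_, IsUltrametric.discrete hε, fun x y => ?_⟩
  split_ifs with h
  · exact hd_nonneg x y
  · exact hεd ⟨(x, y), h⟩

theorem exists_isGreatest_isUltrametric_le [Finite X] {d : X → X → ℝ}
    (hd_nonneg : ∀ x y, 0 ≤ d x y) (hd_pos : ∀ x y, x ≠ y → 0 < d x y) :
    ∃ u, IsGreatest {v | IsUltrametric v ∧ v ≤ d} u := by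
  set S := {v | IsUltrametric v ∧ v ≤ d}
  obtain ⟨v₀, hv₀⟩ := exists_isUltrametric_le hd_nonneg hd_pos
  have : Nonempty S := ⟨⟨v₀, hv₀⟩⟩
  have hbdd : ∀ x y, BddAbove (range fun v : S => v.1 x y) := fun x y =>
    ⟨d x y, by rintro _ ⟨v, rfl⟩; exact v.2.2 x y⟩
  exact ⟨fun x y => ⨆ v : S, v.1 x y,
    ⟨IsUltrametric.ciSup (fun v => v.2.1) hbdd, fun x y => ciSup_le fun v => v.2.2 x y⟩,
    fun v hv x y => le_ciSup (hbdd x y) ⟨v, hv⟩⟩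

end

theorem exists_maximal_subdominant_ultrametric_general
    {X : Type*} [Fintype X]
    (d : X → X → ℝ)
    (hd_nonneg : ∀ x y, 0 ≤ d x y)
    (hd_eq : ∀ x y, d x y = 0 ↔ x = y) :
    ∃ u : X → X → ℝ,
      (∀ x y, 0 ≤ u x y) ∧
      (∀ x y, u x y = 0 ↔ x = y) ∧
      (∀ x y, u x y = u y x) ∧
      (∀ x y z, u x y ≤ max (u x z) (u z y)) ∧
      (∀ x y, u x y ≤ d x y) ∧
      (∀ u' : X → X → ℝ,
        (∀ x y, 0 ≤ u' x y) →
        (∀ x y, u' x y = 0 ↔ x = y) →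
        (∀ x y, u' x y = u' y x) →
        (∀ x y z, u' x y ≤ max (u' x z) (u' z y)) →
        (∀ x y, u' x y ≤ d x y) →
        ∀ x y, u' x y ≤ u x y) := by
  obtain ⟨u, ⟨hu, hud⟩, hmax⟩ := exists_isGreatest_isUltrametric_le hd_nonneg
    fun x y hxy => (hd_nonneg x y).lt_of_ne' (mt (hd_eq x y).1 hxy)
  exact ⟨u, hu.nonneg, hu.eq_zero_iff, hu.symm, hu.le_max, hud,
    fun u' h₀ h₁ h₂ h₃ hu'd => hmax ⟨⟨h₀, h₁, h₂, h₃⟩, hu'd⟩⟩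

/-- Existence of the maximal subdominant ultrametric: for every
metric `d` on a finite nonempty set `X` there exists an ultrametric `u ≤ d`
on `X` which dominates every ultrametric on `X` bounded above by `d`. -/
theorem exists_maximal_subdominant_ultrametric
    {X : Type*} [Fintype X] [Nonempty X]
    (d : X → X → ℝ)
    (hd_nonneg : ∀ x y, 0 ≤ d x y)
    (hd_eq : ∀ x y, d x y = 0 ↔ x = y)
    (hd_symm : ∀ x y, d x y = d y x)
    (hd_tri : ∀ x y z, d x y ≤ d x z + d z y) :
    ∃ u : X → X → ℝ,
      (∀ x y, 0 ≤ u x y) ∧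
      (∀ x y, u x y = 0 ↔ x = y) ∧
      (∀ x y, u x y = u y x) ∧
      (∀ x y z, u x y ≤ max (u x z) (u z y)) ∧
      (∀ x y, u x y ≤ d x y) ∧
      (∀ u' : X → X → ℝ,
        (∀ x y, 0 ≤ u' x y) →
        (∀ x y, u' x y = 0 ↔ x = y) →
        (∀ x y, u' x y = u' y x) →
        (∀ x y z, u' x y ≤ max (u' x z) (u' z y)) →
        (∀ x y, u' x y ≤ d x y) →
        ∀ x y, u' x y ≤ u x y) :=
  exists_maximal_subdominant_ultrametric_general d hd_nonneg hd_eq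
end

section
/- The Hausdorff distance in an ultrametric space satisfies the strong triangle inequality: let Z be a metric space whose distance satisfies the strong triangle inequality d(x,y) ≤ max(d(x,z), d(z,y)) for all x, y, z ∈ Z. Then for all nonempty bounded subsets A, B, C of Z, the Hausdorff distance satisfies d_H(A, B) ≤ max(d_H(A, C), d_H(C, B)). -/
/-!
Ultrametric inequalities survive passing to infima: if `r` exceeds both `infEDist x t` and
`hausdorffEDist t u`, there are `y ∈ t` and `z ∈ u` with `edist x y < r` and `edist y z < r`,
hence `edist x z < r`. So `infEDist x u ≤ max (infEDist x t) (hausdorffEDist t u)`, and taking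
suprema over both sets gives the strong triangle inequality for the Hausdorff distance.
-/

open Metric

section Ultrametric

variable {X : Type*} [PseudoMetricSpace X] [IsUltrametricDist X]

theorem edist_triangle_max (x y z : X) : edist x z ≤ max (edist x y) (edist y z) := by
  simpa only [edist_dist, ENNReal.ofReal_max] using
    ENNReal.ofReal_le_ofReal (dist_triangle_max x y z)

namespace Metric

variable {x : X} {s t u : Set X}

theorem infEDist_le_max_infEDist_hausdorffEDist :
    infEDist x u ≤ max (infEDist x t) (hausdorffEDist t u) := by
  refine le_of_forall_gt fun r hr => ?_
  obtain ⟨hxt, htu⟩ := max_lt_iff.mp hr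
  obtain ⟨y, hyt, hxy⟩ := infEDist_lt_iff.mp hxt
  obtain ⟨z, hzu, hyz⟩ := exists_edist_lt_of_hausdorffEDist_lt hyt htu
  calc infEDist x u ≤ edist x z := infEDist_le_edist_of_mem hzu
    _ ≤ max (edist x y) (edist y z) := edist_triangle_max x y z
    _ < r := max_lt hxy hyz

theorem hausdorffEDist_triangle_max :
    hausdorffEDist s u ≤ max (hausdorffEDist s t) (hausdorffEDist t u) := by
  refine hausdorffEDist_le_of_infEDist (fun x hx => ?_) (fun x hx => ?_)
  · calc infEDist x u ≤ max (infEDist x t) (hausdorffEDist t u) :=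
          infEDist_le_max_infEDist_hausdorffEDist
      _ ≤ max (hausdorffEDist s t) (hausdorffEDist t u) := by
          grw [infEDist_le_hausdorffEDist_of_mem hx]
  · calc infEDist x s ≤ max (infEDist x t) (hausdorffEDist t s) :=
          infEDist_le_max_infEDist_hausdorffEDist
      _ ≤ max (hausdorffEDist u t) (hausdorffEDist t s) := by
          grw [infEDist_le_hausdorffEDist_of_mem hx]
      _ = max (hausdorffEDist s t) (hausdorffEDist t u) := by
          rw [max_comm, hausdorffEDist_comm, hausdorffEDist_comm (s := u)]

theorem hausdorffDist_triangle_max (hst : hausdorffEDist s t ≠ ⊤) (htu : hausdorffEDist t u ≠ ⊤) :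
    hausdorffDist s u ≤ max (hausdorffDist s t) (hausdorffDist t u) := by
  rw [hausdorffDist, hausdorffDist, hausdorffDist, ← ENNReal.toReal_max hst htu]
  exact ENNReal.toReal_mono (max_ne_top hst htu) hausdorffEDist_triangle_max

end Metric

end Ultrametric

/-- The Hausdorff distance in an ultrametric space satisfies the
strong triangle inequality: if the distance of a metric space `Z` satisfies
`d(x,y) ≤ max(d(x,z), d(z,y))` for all `x, y, z`, then for all nonempty
bounded subsets `A, B, C` of `Z`,
`d_H(A, B) ≤ max(d_H(A, C), d_H(C, B))`. -/
theorem hausdorffDist_strong_triangle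
    {Z : Type*} [MetricSpace Z]
    (hultra : ∀ x y z : Z, dist x y ≤ max (dist x z) (dist z y))
    (A B C : Set Z)
    (hA : A.Nonempty) (hB : B.Nonempty) (hC : C.Nonempty)
    (hAb : Bornology.IsBounded A) (hBb : Bornology.IsBounded B)
    (hCb : Bornology.IsBounded C) :
    Metric.hausdorffDist A B ≤
      max (Metric.hausdorffDist A C) (Metric.hausdorffDist C B) := by
  have : IsUltrametricDist Z := ⟨fun x y z => hultra x z y⟩
  exact hausdorffDist_triangle_max (hausdorffEDist_ne_top_of_nonempty_of_bounded hA hC hAb hCb)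
    (hausdorffEDist_ne_top_of_nonempty_of_bounded hC hB hCb hBb)
end
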